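/- Let p be a prime and R a perfect 𝔽_p-algebra. Then there is a unique ring isomorphism C(R) ≅ W(R) between C(R) and the ring W(R) of p-typical Witt vectors of R that commutes with the canonical projections of both rings onto R (for C(R) the projection induced by π, for W(R) the projection onto the zeroth Witt component). -/

import Mathlib

set_option synthInstance.maxHeartbeats 1000000
set_option maxHeartbeats 1000000

open MonoidAlgebra

/-- `ℤR`: the monoid algebra over `ℤ` of the multiplicative monoid `(R, ·)`. -/
abbrev ZR (R : Type*) [CommRing R] : Type _ := MonoidAlgebra ℤ R

/-- The canonical ring homomorphism `π : ℤR → R`, `Σ n_r [r] ↦ Σ n_r r`. -/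
noncomputable def piHom (R : Type*) [CommRing R] : ZR R →+* R :=
  (MonoidAlgebra.lift ℤ R R (MonoidHom.id R)).toRingHom

/-- The ideal `I = ker (π : ℤR → R)`. -/
noncomputable def Iid (R : Type*) [CommRing R] : Ideal (ZR R) := RingHom.ker (piHom R)

/-- The inverse limit `lim_ν A⧸I^ν` realized as a subring of the product `Π ν, A⧸I^ν`
(families compatible under the canonical factor maps). -/
def Clim (A : Type*) [CommRing A] (I : Ideal A) : Subring (Π ν : ℕ, A ⧸ I ^ ν) where
  carrier := { x | ∀ ⦃m ν : ℕ⦄ (h : m ≤ ν),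
    Ideal.Quotient.factor (Ideal.pow_le_pow_right h) (x ν) = x m }
  zero_mem' := by intro m ν h; simp
  one_mem' := by intro m ν h; simp
  add_mem' := by intro x y hx hy m ν h; simp only [Pi.add_apply, map_add, hx h, hy h]
  mul_mem' := by intro x y hx hy m ν h; simp only [Pi.mul_apply, map_mul, hx h, hy h]
  neg_mem' := by intro x hx m ν h; simp only [Pi.neg_apply, map_neg, hx h]

/-- The projection of the completion `lim_ν A⧸I^ν` onto its `ν`-th level `A⧸I^ν`. -/
def Ceval (A : Type*) [CommRing A] (I : Ideal A) (ν : ℕ) : Clim A I →+* A ⧸ I ^ ν :=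
  (Pi.evalRingHom _ ν).comp (Clim A I).subtype

/-- The canonical map `A → lim_ν A⧸I^ν`. -/
def CofRingHom (A : Type*) [CommRing A] (I : Ideal A) : A →+* Clim A I where
  toFun a := ⟨fun ν => Ideal.Quotient.mk _ a, fun _ _ _ => Ideal.Quotient.factor_mk _ _⟩
  map_one' := rfl
  map_mul' _ _ := rfl
  map_zero' := rfl
  map_add' _ _ := rfl

/-- `C(R)`: the `I`-adic completion of `ℤR`. -/
noncomputable abbrev CR (R : Type*) [CommRing R] : Type _ := Clim (ZR R) (Iid R)

/-- The canonical projection `π̄ : C(R) → R` induced by `π`. -/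
noncomputable def CtoR (R : Type*) [CommRing R] : CR R →+* R :=
  (Ideal.Quotient.lift (Iid R) (piHom R) (fun _ ha => ha)).comp
    (((Ideal.quotEquivOfEq (pow_one (Iid R))).toRingHom).comp (Ceval (ZR R) (Iid R) 1))


/-!
Sending `[r]` to its Teichmüller representative defines a ring map `α : ℤR → W(R)` lifting `π`.
As `R` is perfect, `W(R)` is `p`-torsion free and `p ^ ν W(R)` is the kernel of the truncation
`W(R) → W_ν(R)`; as Frobenius is onto, `r ↦ [r]` is additive modulo `(p) + I²`, so
`I ⊆ (p) + I²`. Together these give `α⁻¹(p ^ ν W(R)) = I ^ ν`, and `α` is onto modulo every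
`p ^ ν`, so `α` induces compatible isomorphisms `ℤR/I^ν ≅ W_ν(R)`, whose limit is `C(R) ≅ W(R)`.

For uniqueness, a ring endomorphism of `W(R)` inducing the identity on `R` fixes Teichmüller
representatives (they have `p ^ n`-th roots, and `x ≡ y mod p` gives
`x ^ p ^ n ≡ y ^ p ^ n mod p ^ (n + 1)`), hence is the identity as `W(R)` is `p`-adically
separated.
-/

open WittVector

namespace WittVector

variable {p : ℕ} [Fact p.Prime] {R : Type*} [CommRing R] [CharP R p] [PerfectRing R p]

theorem ker_truncate_eq_span_p_pow (n : ℕ) :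
    RingHom.ker (truncate n : WittVector p R →+* _) = Ideal.span {(p : WittVector p R) ^ n} := by
  ext x
  rw [mem_ker_truncate, mem_span_p_pow_iff_le_coeff_eq_zero]

theorem sub_mem_span_p_iff {x y : WittVector p R} :
    x - y ∈ Ideal.span {(p : WittVector p R)} ↔ x.coeff 0 = y.coeff 0 := by
  rw [mem_span_p_iff_coeff_zero_eq_zero, ← constantCoeff_apply, map_sub, sub_eq_zero]
  rfl

theorem eq_of_forall_sub_mem_span_p_pow {x y : WittVector p R}
    (h : ∀ n, x - y ∈ Ideal.span {(p : WittVector p R) ^ n}) : x = y := by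
  rw [← sub_eq_zero]
  ext n
  simpa using (mem_span_p_pow_iff_le_coeff_eq_zero _ (n + 1)).mp (h (n + 1)) n n.lt_succ_self

theorem exists_eq_teichmuller_add_p_mul (w : WittVector p R) :
    ∃ z, w = teichmuller p (w.coeff 0) + p * z := by
  obtain ⟨z, hz⟩ := Ideal.mem_span_singleton.mp
    (sub_mem_span_p_iff.mpr (teichmuller_coeff_zero p (w.coeff 0)).symm)
  exact ⟨z, by rw [← hz, add_sub_cancel]⟩

theorem mem_span_p_of_p_pow_mul_mem_span_p_pow_succ {x : WittVector p R} {n : ℕ}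
    (h : (p : WittVector p R) ^ n * x ∈ Ideal.span {(p : WittVector p R) ^ (n + 1)}) :
    x ∈ Ideal.span {(p : WittVector p R)} := by
  have hn := (mem_span_p_pow_iff_le_coeff_eq_zero _ (n + 1)).mp h n n.lt_succ_self
  have hcoeff := mul_pow_charP_coeff_succ x (m := 0) (n := n)
  rw [zero_add] at hcoeff
  rw [mul_comm, hcoeff, ← iterateFrobeniusEquiv_def, EmbeddingLike.map_eq_zero_iff] at hn
  exact (mem_span_p_iff_coeff_zero_eq_zero x).mpr hn

variable {g : WittVector p R →+* WittVector p R} (hg : ∀ w, (g w).coeff 0 = w.coeff 0)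
include hg

theorem map_teichmuller_of_coeff_zero (r : R) : g (teichmuller p r) = teichmuller p r := by
  refine eq_of_forall_sub_mem_span_p_pow fun n => ?_
  cases n with
  | zero => simp
  | succ n =>
    obtain ⟨s, rfl⟩ := (iterateFrobeniusEquiv R p n).surjective r
    have hs : teichmuller p (iterateFrobeniusEquiv R p n s) = teichmuller p s ^ p ^ n := by
      rw [iterateFrobeniusEquiv_def, map_pow]
    have hmod : (p : WittVector p R) ∣ g (teichmuller p s) - teichmuller p s :=
      Ideal.mem_span_singleton.mp (sub_mem_span_p_iff.mpr (hg _))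
    rw [hs, map_pow, Ideal.mem_span_singleton]
    exact dvd_sub_pow_of_dvd_sub hmod n

theorem ringHom_eq_id_of_coeff_zero : g = RingHom.id _ := by
  have key : ∀ n w, g w - w ∈ Ideal.span {(p : WittVector p R) ^ n} := by
    intro n
    induction n with
    | zero => simp
    | succ n ih =>
      intro w
      obtain ⟨z, hz⟩ := exists_eq_teichmuller_add_p_mul w
      obtain ⟨y, hy⟩ := Ideal.mem_span_singleton.mp (ih z)
      have hgw : g w = teichmuller p (w.coeff 0) + p * g z := by
        conv_lhs => rw [hz, map_add, map_mul, map_natCast, map_teichmuller_of_coeff_zero hg]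
      refine Ideal.mem_span_singleton.mpr ⟨y, ?_⟩
      rw [hgw, pow_succ]
      linear_combination p * hy - hz
  exact RingHom.ext fun w => eq_of_forall_sub_mem_span_p_pow fun n => key n w

end WittVector

section GroupRing

variable {R : Type*} [CommRing R]

theorem piHom_of (r : R) : piHom R (of ℤ R r) = r := by
  simp [piHom]

theorem Iid_le_of_of_add_sub_mem {J : Ideal (ZR R)}
    (hJ : ∀ x y : R, of ℤ R x + of ℤ R y - of ℤ R (x + y) ∈ J) : Iid R ≤ J := by
  let φ : R →+ ZR R ⧸ J := AddMonoidHom.mk' (fun r => Ideal.Quotient.mk J (of ℤ R r))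
    fun x y => by rw [← map_add, Ideal.Quotient.eq, ← neg_sub, neg_mem_iff]; exact hJ x y
  have hφ : ∀ a, Ideal.Quotient.mk J a = φ (piHom R a) := by
    intro a
    induction a using MonoidAlgebra.induction_on with
    | of r => rw [piHom_of]; rfl
    | add a b ha hb => rw [map_add, map_add, map_add, ha, hb]
    | smul n a ha => rw [map_zsmul, map_zsmul, map_zsmul, ha]
  intro a ha
  rw [← Ideal.Quotient.eq_zero_iff_mem, hφ, RingHom.mem_ker.mp ha, map_zero]

variable (p : ℕ) [CharP R p]

theorem natCast_mem_Iid : (p : ZR R) ∈ Iid R := by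
  simp [Iid, RingHom.mem_ker, CharP.cast_eq_zero]

variable [Fact p.Prime]

-- Write `x = u ^ p`, `y = v ^ p` and `[u] + [v] = [u + v] + δ` with `δ ∈ I`; expanding
-- `([u] + [v]) ^ p` twice shows `[x] + [y] - [x + y] ≡ δ ^ p` modulo `p`.
theorem of_add_sub_mem_span_p_sup_sq (hsurj : Function.Surjective (frobenius R p)) (x y : R) :
    of ℤ R x + of ℤ R y - of ℤ R (x + y) ∈ Ideal.span {(p : ZR R)} ⊔ Iid R ^ 2 := by
  have hp : p.Prime := Fact.out
  obtain ⟨u, rfl⟩ := hsurj x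
  obtain ⟨v, rfl⟩ := hsurj y
  set δ := of ℤ R u + of ℤ R v - of ℤ R (u + v)
  have hδ : δ ∈ Iid R := by
    rw [Iid, RingHom.mem_ker, map_sub, map_add, piHom_of, piHom_of, piHom_of, sub_self]
  obtain ⟨c₁, hc₁⟩ := exists_add_pow_prime_eq hp (of ℤ R u) (of ℤ R v)
  obtain ⟨c₂, hc₂⟩ := exists_add_pow_prime_eq hp (of ℤ R (u + v)) δ
  have hsum : of ℤ R (u + v) + δ = of ℤ R u + of ℤ R v := by ring
  have key : of ℤ R (frobenius R p u) + of ℤ R (frobenius R p v) -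
      of ℤ R (frobenius R p u + frobenius R p v) =
      p * (of ℤ R (u + v) * δ * c₂ - of ℤ R u * of ℤ R v * c₁) + δ ^ p := by
    rw [← map_add (frobenius R p), frobenius_def, frobenius_def, frobenius_def, map_pow, map_pow,
      map_pow]
    rw [hsum] at hc₂
    linear_combination hc₂ - hc₁
  rw [key]
  refine Ideal.add_mem _ (Ideal.mem_sup_left (Ideal.mem_span_singleton.mpr (dvd_mul_right _ _)))
    (Ideal.mem_sup_right (Ideal.pow_le_pow_right hp.two_le (Ideal.pow_mem_pow hδ p)))

theorem Iid_pow_le_span_p_pow_sup (hsurj : Function.Surjective (frobenius R p)) (n : ℕ) :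
    Iid R ^ n ≤ Ideal.span {(p : ZR R) ^ n} ⊔ Iid R ^ (n + 1) := by
  have hI : Iid R ≤ Ideal.span {(p : ZR R)} ⊔ Iid R ^ 2 :=
    Iid_le_of_of_add_sub_mem (of_add_sub_mem_span_p_sup_sq p hsurj)
  have hp : Ideal.span {(p : ZR R)} ≤ Iid R :=
    (Ideal.span_singleton_le_iff_mem _).mpr (natCast_mem_Iid p)
  induction n with
  | zero => simp
  | succ n ih =>
    have hpn : Ideal.span {(p : ZR R) ^ n} ≤ Iid R ^ n := by
      rw [← Ideal.span_singleton_pow]; exact Ideal.pow_right_mono hp n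
    calc Iid R ^ (n + 1) = Iid R ^ n * Iid R := pow_succ _ _
      _ ≤ (Ideal.span {(p : ZR R) ^ n} ⊔ Iid R ^ (n + 1)) *
            (Ideal.span {(p : ZR R)} ⊔ Iid R ^ 2) := Ideal.mul_mono ih hI
      _ ≤ Ideal.span {(p : ZR R) ^ (n + 1)} ⊔ Iid R ^ (n + 2) := by
          simp only [Ideal.sup_mul, Ideal.mul_sup, sup_le_iff]
          refine ⟨⟨?_, ?_⟩, ?_, ?_⟩
          · rw [Ideal.span_singleton_mul_span_singleton, ← pow_succ]; exact le_sup_left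
          · exact le_sup_of_le_right ((Ideal.mul_mono le_rfl hp).trans_eq (pow_succ _ _).symm)
          · exact le_sup_of_le_right ((Ideal.mul_mono hpn le_rfl).trans_eq (pow_add _ _ _).symm)
          · exact le_sup_of_le_right
              ((pow_add _ _ _).symm.trans_le (Ideal.pow_le_pow_right (by omega)))

end GroupRing

section Completion

variable {p : ℕ} [Fact p.Prime] {R : Type*} [CommRing R]

theorem WittVector.eq_of_forall_truncate_eq {x y : WittVector p R}
    (h : ∀ n, truncate n x = truncate n y) : x = y :=
  ext fun n => by
    simpa only [WittVector.coeff_truncate] using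
      congrArg (TruncatedWittVector.coeff ⟨n, n.lt_succ_self⟩) (h (n + 1))

variable {A : Type*} [CommRing A] {I : Ideal A} {f : A →+* WittVector p R}
  (hker : ∀ ν, RingHom.ker ((truncate ν).comp f) = I ^ ν)
  (hsurj : ∀ ν, Function.Surjective ((truncate ν).comp f))

noncomputable def quotientPowEquivTruncated (ν : ℕ) : A ⧸ I ^ ν ≃+* TruncatedWittVector p ν R :=
  (Ideal.quotEquivOfEq (hker ν).symm).trans (RingHom.quotientKerEquivOfSurjective (hsurj ν))

theorem quotientPowEquivTruncated_mk (ν : ℕ) (a : A) :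
    quotientPowEquivTruncated hker hsurj ν (Ideal.Quotient.mk _ a) = truncate ν (f a) :=
  rfl

theorem truncate_quotientPowEquivTruncated {m ν : ℕ} (h : m ≤ ν) (y : A ⧸ I ^ ν) :
    TruncatedWittVector.truncate h (quotientPowEquivTruncated hker hsurj ν y) =
      quotientPowEquivTruncated hker hsurj m
        (Ideal.Quotient.factor (Ideal.pow_le_pow_right h) y) := by
  obtain ⟨a, rfl⟩ := Ideal.Quotient.mk_surjective y
  rw [Ideal.Quotient.factor_mk, quotientPowEquivTruncated_mk, quotientPowEquivTruncated_mk,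
    TruncatedWittVector.truncate_wittVector_truncate]

noncomputable def completionToWitt : Clim A I →+* WittVector p R :=
  WittVector.lift (fun ν => (quotientPowEquivTruncated hker hsurj ν).toRingHom.comp (Ceval A I ν))
    fun _ _ h => RingHom.ext fun x =>
      (truncate_quotientPowEquivTruncated hker hsurj h _).trans (congrArg _ (x.2 h))

theorem truncate_completionToWitt (ν : ℕ) (x : Clim A I) :
    truncate ν (completionToWitt hker hsurj x) =
      quotientPowEquivTruncated hker hsurj ν (Ceval A I ν x) :=
  truncate_lift _ _ x

theorem completionToWitt_bijective : Function.Bijective (completionToWitt hker hsurj) := by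
  refine ⟨(injective_iff_map_eq_zero _).mpr fun x hx => Subtype.ext (funext fun ν => ?_),
    fun w => ?_⟩
  · have := truncate_completionToWitt hker hsurj ν x
    rwa [hx, map_zero, eq_comm, EmbeddingLike.map_eq_zero_iff] at this
  · let e := quotientPowEquivTruncated hker hsurj
    refine ⟨⟨fun ν => (e ν).symm (truncate ν w), fun m ν h => (e m).injective ?_⟩,
      eq_of_forall_truncate_eq fun ν => ?_⟩
    · rw [← truncate_quotientPowEquivTruncated hker hsurj h, RingEquiv.apply_symm_apply,
        RingEquiv.apply_symm_apply, TruncatedWittVector.truncate_wittVector_truncate]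
    · rw [truncate_completionToWitt]
      exact RingEquiv.apply_symm_apply _ _

noncomputable def completionEquivWitt : Clim A I ≃+* WittVector p R :=
  RingEquiv.ofBijective _ (completionToWitt_bijective hker hsurj)

theorem coeff_zero_completionEquivWitt {x : Clim A I} {a : A}
    (ha : Ideal.Quotient.mk _ a = Ceval A I 1 x) :
    (completionEquivWitt hker hsurj x).coeff 0 = (f a).coeff 0 := by
  change (completionToWitt hker hsurj x).coeff 0 = _
  have h := truncate_completionToWitt hker hsurj 1 x
  rw [← ha, quotientPowEquivTruncated_mk] at h
  simpa only [WittVector.coeff_truncate] using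
    congrArg (TruncatedWittVector.coeff ⟨0, one_pos⟩) h

end Completion

section TeichmullerLift

variable (p : ℕ) [Fact p.Prime] (R : Type*) [CommRing R]

noncomputable def teichmullerLift : ZR R →+* WittVector p R :=
  (MonoidAlgebra.lift ℤ (WittVector p R) R (teichmuller p)).toRingHom

variable {p R}

theorem teichmullerLift_of (r : R) : teichmullerLift p R (of ℤ R r) = teichmuller p r := by
  simp [teichmullerLift]

theorem coeff_zero_teichmullerLift (a : ZR R) : (teichmullerLift p R a).coeff 0 = piHom R a := by
  have h : constantCoeff.comp (teichmullerLift p R) = piHom R := by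
    refine MonoidAlgebra.ringHom_ext' (RingHom.ext_int _ _) (MonoidHom.ext fun r => ?_)
    change constantCoeff (teichmullerLift p R (of ℤ R r)) = piHom R (of ℤ R r)
    rw [teichmullerLift_of, piHom_of, constantCoeff_apply, teichmuller_coeff_zero]
  exact RingHom.congr_fun h a

variable [CharP R p] [PerfectRing R p]

theorem comap_teichmullerLift_span_p :
    (Ideal.span {(p : WittVector p R)}).comap (teichmullerLift p R) = Iid R := by
  ext a
  rw [Ideal.mem_comap, mem_span_p_iff_coeff_zero_eq_zero, coeff_zero_teichmullerLift]
  rfl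

theorem Iid_pow_le_comap_teichmullerLift (n : ℕ) :
    Iid R ^ n ≤ (Ideal.span {(p : WittVector p R) ^ n}).comap (teichmullerLift p R) := by
  rw [← Ideal.span_singleton_pow, ← comap_teichmullerLift_span_p]
  exact Ideal.le_comap_pow _ n

-- Write `a = p ^ n b + c` with `c ∈ I ^ (n + 1)`; then `p ^ n α(b) ∈ (p ^ (n + 1))`, so
-- `α(b) ∈ (p)` as `W(R)` is `p`-torsion free, i.e. `b ∈ I`.
theorem comap_teichmullerLift_span_p_pow (n : ℕ) :
    (Ideal.span {(p : WittVector p R) ^ n}).comap (teichmullerLift p R) = Iid R ^ n := by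
  refine le_antisymm ?_ (Iid_pow_le_comap_teichmullerLift n)
  induction n with
  | zero => simp
  | succ n ih =>
    intro a ha
    have haI : a ∈ Iid R ^ n := ih <|
      Ideal.comap_mono (Ideal.span_singleton_le_span_singleton.mpr (pow_dvd_pow _ n.le_succ)) ha
    obtain ⟨_, hb, c, hc, rfl⟩ :=
      Submodule.mem_sup.mp (Iid_pow_le_span_p_pow_sup p (surjective_frobenius R p) n haI)
    obtain ⟨b, rfl⟩ := Ideal.mem_span_singleton'.mp hb
    have hαb : (p : WittVector p R) ^ n * teichmullerLift p R b ∈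
        Ideal.span {(p : WittVector p R) ^ (n + 1)} := by
      have := Ideal.sub_mem _ (Ideal.mem_comap.mp ha) (Iid_pow_le_comap_teichmullerLift _ hc)
      rwa [map_add, add_sub_cancel_right, map_mul, map_pow, map_natCast, mul_comm] at this
    have hbI : b ∈ Iid R := by
      rw [← comap_teichmullerLift_span_p]
      exact mem_span_p_of_p_pow_mul_mem_span_p_pow_succ hαb
    refine Ideal.add_mem _ ?_ hc
    rw [mul_comm, pow_succ]
    exact Ideal.mul_mem_mul (Ideal.pow_mem_pow (natCast_mem_Iid p) n) hbI

theorem exists_teichmullerLift_sub_mem_span_p_pow (n : ℕ) (w : WittVector p R) :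
    ∃ a, teichmullerLift p R a - w ∈ Ideal.span {(p : WittVector p R) ^ n} := by
  induction n generalizing w with
  | zero => simp
  | succ n ih =>
    obtain ⟨z, hz⟩ := exists_eq_teichmuller_add_p_mul w
    obtain ⟨b, hb⟩ := ih z
    obtain ⟨y, hy⟩ := Ideal.mem_span_singleton.mp hb
    refine ⟨of ℤ R (w.coeff 0) + p * b, Ideal.mem_span_singleton.mpr ⟨y, ?_⟩⟩
    rw [map_add, map_mul, map_natCast, teichmullerLift_of, pow_succ]
    linear_combination p * hy - hz

theorem ker_truncate_comp_teichmullerLift (n : ℕ) :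
    RingHom.ker ((truncate n).comp (teichmullerLift p R)) = Iid R ^ n := by
  rw [← RingHom.comap_ker, ker_truncate_eq_span_p_pow, comap_teichmullerLift_span_p_pow]

theorem truncate_comp_teichmullerLift_surjective (n : ℕ) :
    Function.Surjective ((truncate n).comp (teichmullerLift p R)) := by
  intro v
  obtain ⟨w, rfl⟩ := truncate_surjective p n R v
  obtain ⟨a, ha⟩ := exists_teichmullerLift_sub_mem_span_p_pow n w
  rw [← ker_truncate_eq_span_p_pow, RingHom.mem_ker, map_sub, sub_eq_zero] at ha
  exact ⟨a, ha⟩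

end TeichmullerLift

theorem CtoR_eq_piHom {R : Type*} [CommRing R] {x : CR R} {a : ZR R}
    (ha : Ideal.Quotient.mk _ a = Ceval (ZR R) (Iid R) 1 x) : CtoR R x = piHom R a := by
  rw [CtoR, RingHom.comp_apply, RingHom.comp_apply, ← ha, RingEquiv.toRingHom_eq_coe,
    RingEquiv.coe_toRingHom, Ideal.quotEquivOfEq_mk]
  exact Ideal.Quotient.lift_mk _ _ _

/-- Let `p` be a prime and `R` a perfect `𝔽_p`-algebra. Then there is a
unique ring isomorphism `C(R) ≅ W(R)` onto the ring of `p`-typical Witt vectors of `R`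
commuting with the canonical projections of both rings onto `R` (for `C(R)` the projection
`π̄` induced by `π`, for `W(R)` the zeroth Witt component). -/
theorem statement13 (p : ℕ) [Fact p.Prime] (R : Type*) [CommRing R] [CharP R p]
    (hperf : Function.Bijective fun x : R => x ^ p) :
    ∃! e : CR R ≃+* WittVector p R, ∀ x : CR R, (e x).coeff 0 = CtoR R x := by
  have : PerfectRing R p := ⟨hperf⟩
  let e := completionEquivWitt (ker_truncate_comp_teichmullerLift (p := p) (R := R))
    (truncate_comp_teichmullerLift_surjective (p := p) (R := R))
  have he : ∀ x, (e x).coeff 0 = CtoR R x := fun x => by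
    obtain ⟨a, ha⟩ := Ideal.Quotient.mk_surjective (Ceval (ZR R) (Iid R) 1 x)
    rw [CtoR_eq_piHom ha, ← coeff_zero_teichmullerLift (p := p)]
    exact coeff_zero_completionEquivWitt _ _ ha
  refine ⟨e, he, fun e' he' => RingEquiv.ext fun x => ?_⟩
  have hid := WittVector.ringHom_eq_id_of_coeff_zero
    (g := (e' : CR R →+* WittVector p R).comp (e.symm : WittVector p R →+* CR R))
    fun w => by simp [he', ← he]
  simpa using RingHom.congr_fun hid (e x)
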